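/- Suppose Λ₁ and Λ₂ are complementary, primitive sublattices of ℤⁿ, with restriction maps r_i : ℤⁿ → Λ_i*, and suppose the induced map Short(ℤⁿ) → Short(Λ₁) is surjective. Then the rule φ([r₁(χ)]) = [r₂(χ)] for χ ∈ Char(ℤⁿ) gives a well-defined isomorphism φ : (C(Λ₁), d₁) → (C(Λ₂), −d₂) of torsors with ℚ-valued maps. -/

import Mathlib

set_option linter.unusedSectionVars false

open Matrix BigOperators

namespace Greene

/-- A rational number is an integer. -/
def isInt (q : ℚ) : Prop := ∃ m : ℤ, q = (m : ℚ)

section LatticeDefs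

variable {ι : Type} [Fintype ι] [DecidableEq ι]
variable {ι' : Type} [Fintype ι'] [DecidableEq ι']

/-- The bilinear form on `ι → ℚ` with (integral) Gram matrix `B`. -/
def qform (B : Matrix ι ι ℤ) (x y : ι → ℚ) : ℚ :=
  x ⬝ᵥ ((B.map (Int.cast : ℤ → ℚ)) *ᵥ y)

/-- The set of integer vectors: the standard lattice inside `ι → ℚ`. -/
def intVecs (ι : Type) [Fintype ι] [DecidableEq ι] : Set (ι → ℚ) :=
  {x | ∀ i, isInt (x i)}

lemma qform_zero_left (B : Matrix ι ι ℤ) (y : ι → ℚ) : qform B 0 y = 0 :=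
  zero_dotProduct _

lemma qform_add_left (B : Matrix ι ι ℤ) (x x' y : ι → ℚ) :
    qform B (x + x') y = qform B x y + qform B x' y := add_dotProduct _ _ _

lemma qform_neg_left (B : Matrix ι ι ℤ) (x y : ι → ℚ) :
    qform B (-x) y = -qform B x y := neg_dotProduct _ _

/-- The dual lattice `S* = {x ∈ span_ℚ S | ⟨x,y⟩ ∈ ℤ for all y ∈ S}`. -/
def dualOf (B : Matrix ι ι ℤ) (S : Set (ι → ℚ)) : AddSubgroup (ι → ℚ) where
  carrier := {x | x ∈ Submodule.span ℚ S ∧ ∀ y ∈ S, isInt (qform B x y)}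
  zero_mem' := ⟨Submodule.zero_mem _, fun y _ => ⟨0, by simp [qform_zero_left]⟩⟩
  add_mem' := by
    intro a b ha hb
    refine ⟨Submodule.add_mem _ ha.1 hb.1, fun y hy => ?_⟩
    obtain ⟨m, hm⟩ := ha.2 y hy
    obtain ⟨m', hm'⟩ := hb.2 y hy
    exact ⟨m + m', by rw [qform_add_left, hm, hm']; push_cast; ring⟩
  neg_mem' := by
    intro a ha
    refine ⟨Submodule.neg_mem _ ha.1, fun y hy => ?_⟩
    obtain ⟨m, hm⟩ := ha.2 y hy
    exact ⟨-m, by rw [qform_neg_left, hm]; push_cast; ring⟩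

/-- Characteristic covectors: `χ ∈ S*` with `⟨χ,y⟩ ≡ ⟨y,y⟩ (mod 2)` for all `y ∈ S`. -/
def CharOf (B : Matrix ι ι ℤ) (S : Set (ι → ℚ)) : Set (ι → ℚ) :=
  {χ | χ ∈ dualOf B S ∧ ∀ y ∈ S, ∃ m : ℤ, qform B χ y - qform B y y = 2 * (m : ℚ)}

/-- Two covectors are in the same class mod `2S`. -/
def SameClass (S : Set (ι → ℚ)) (χ χ' : ι → ℚ) : Prop :=
  ∃ y ∈ S, χ' = χ + (2 : ℚ) • y

/-- Short characteristic covectors: minimal norm in their class mod `2S`. -/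
def ShortOf (B : Matrix ι ι ℤ) (S : Set (ι → ℚ)) : Set (ι → ℚ) :=
  {χ | χ ∈ CharOf B S ∧ ∀ χ' ∈ CharOf B S, SameClass S χ χ' → qform B χ χ ≤ qform B χ' χ'}

/-- Rank of a lattice: dimension of its rational span. -/
noncomputable def rkOf (S : Set (ι → ℚ)) : ℕ := Module.finrank ℚ (Submodule.span ℚ S)

/-- The lattice `S` sitting inside its dual. -/
def latIn (B : Matrix ι ι ℤ) (S : Set (ι → ℚ)) : AddSubgroup (dualOf B S) :=
  AddSubgroup.closure {x | (x : ι → ℚ) ∈ S}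

/-- The discriminant group `S*/S`. -/
def disc (B : Matrix ι ι ℤ) (S : Set (ι → ℚ)) : Type :=
  dualOf B S ⧸ latIn B S

noncomputable instance (B : Matrix ι ι ℤ) (S : Set (ι → ℚ)) : AddCommGroup (disc B S) :=
  inferInstanceAs (AddCommGroup (dualOf B S ⧸ latIn B S))

/-- The class of a dual vector in the discriminant group. -/
def dmk (B : Matrix ι ι ℤ) (S : Set (ι → ℚ)) {x : ι → ℚ} (hx : x ∈ dualOf B S) :
    disc B S := QuotientAddGroup.mk (⟨x, hx⟩ : dualOf B S)

/-- `S` is an additive subgroup (a sublattice, when contained in a lattice). -/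
def IsLat (S : Set (ι → ℚ)) : Prop :=
  (0 : ι → ℚ) ∈ S ∧ ∀ x ∈ S, ∀ y ∈ S, x - y ∈ S

/-- The form is integer valued on `S`. -/
def IntegralOn (B : Matrix ι ι ℤ) (S : Set (ι → ℚ)) : Prop :=
  ∀ x ∈ S, ∀ y ∈ S, isInt (qform B x y)

/-- Unimodularity: the dual lattice equals the lattice. -/
def UnimodularOn (B : Matrix ι ι ℤ) (S : Set (ι → ℚ)) : Prop :=
  ((dualOf B S : AddSubgroup (ι → ℚ)) : Set (ι → ℚ)) = S

/-- Positive definiteness of the form on the span of `S`. -/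
def PosDefOn (B : Matrix ι ι ℤ) (S : Set (ι → ℚ)) : Prop :=
  ∀ x ∈ Submodule.span ℚ S, x ≠ 0 → 0 < qform B x x

/-- Orthogonality of two sublattices. -/
def OrthogonalSets (B : Matrix ι ι ℤ) (S T : Set (ι → ℚ)) : Prop :=
  ∀ x ∈ S, ∀ y ∈ T, qform B x y = 0

/-- `S, T` are complementary sublattices of `L`: orthogonal with ranks summing to `rk L`. -/
noncomputable def ComplementaryIn (B : Matrix ι ι ℤ) (L S T : Set (ι → ℚ)) : Prop :=
  OrthogonalSets B S T ∧ rkOf S + rkOf T = rkOf L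

/-- `S ⊆ L` is a primitive sublattice: the restriction map `L* → S*` surjects. -/
def PrimitiveIn (B : Matrix ι ι ℤ) (L S : Set (ι → ℚ)) : Prop :=
  ∀ x ∈ dualOf B S, ∃ z ∈ dualOf B L, ∀ u ∈ S, qform B z u = qform B x u

/-- `s` is the signature of the form restricted to the span of `S` (Sylvester form). -/
def IsSignatureOf (B : Matrix ι ι ℤ) (S : Set (ι → ℚ)) (s : ℤ) : Prop :=
  ∃ (p q : ℕ) (v : Fin (p + q) → (ι → ℚ)),
    (∀ i, v i ∈ Submodule.span ℚ S) ∧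
    Submodule.span ℚ (Set.range v) = Submodule.span ℚ S ∧
    LinearIndependent ℚ v ∧
    (∀ i j, i ≠ j → qform B (v i) (v j) = 0) ∧
    (∀ i : Fin (p + q),
      if (i : ℕ) < p then 0 < qform B (v i) (v i) else qform B (v i) (v i) < 0) ∧
    s = (p : ℤ) - (q : ℤ)

/-- `S` admits an orthonormal basis of `n` elements, i.e. `S ≅ ℤⁿ`. -/
def HasOrthonormalBasis (B : Matrix ι ι ℤ) (S : Set (ι → ℚ)) (n : ℕ) : Prop :=
  ∃ v : Fin n → (ι → ℚ), (∀ i, v i ∈ S) ∧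
    (∀ i j, qform B (v i) (v j) = if i = j then 1 else 0) ∧
    (∀ x ∈ S, ∃ c : Fin n → ℤ, x = ∑ i, (c i : ℚ) • v i)

/-- Isomorphism of lattices: an additive bijection preserving the forms. -/
def LatIso (B : Matrix ι ι ℤ) (S : Set (ι → ℚ)) (B' : Matrix ι' ι' ℤ) (S' : Set (ι' → ℚ)) :
    Prop :=
  ∃ f : (ι → ℚ) → (ι' → ℚ), Set.BijOn f S S' ∧
    (∀ x ∈ S, ∀ y ∈ S, f (x + y) = f x + f y) ∧
    (∀ x ∈ S, ∀ y ∈ S, qform B' (f x) (f y) = qform B x y)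

/-- An isomorphism of the torsors `C(S₁) → C(S₂)` (given on representatives by `Φ`),
covering the group isomorphism `ψ` of discriminant groups. -/
def TorsorMapIso (B₁ : Matrix ι ι ℤ) (S₁ : Set (ι → ℚ))
    (B₂ : Matrix ι' ι' ℤ) (S₂ : Set (ι' → ℚ))
    (Φ : (ι → ℚ) → (ι' → ℚ)) (ψ : disc B₁ S₁ ≃+ disc B₂ S₂) : Prop :=
  (∀ χ ∈ CharOf B₁ S₁, Φ χ ∈ CharOf B₂ S₂) ∧
  (∀ χ ∈ CharOf B₁ S₁, ∀ χ' ∈ CharOf B₁ S₁,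
    (SameClass S₁ χ χ' ↔ SameClass S₂ (Φ χ) (Φ χ'))) ∧
  (∀ μ ∈ CharOf B₂ S₂, ∃ χ ∈ CharOf B₁ S₁, SameClass S₂ (Φ χ) μ) ∧
  (∀ χ ∈ CharOf B₁ S₁, ∀ χ' ∈ CharOf B₁ S₁,
    ∀ (x : ι → ℚ) (y : ι' → ℚ) (hx : x ∈ dualOf B₁ S₁) (hy : y ∈ dualOf B₂ S₂),
      χ' = χ + (2 : ℚ) • x → Φ χ' = Φ χ + (2 : ℚ) • y →
      ψ (dmk B₁ S₁ hx) = dmk B₂ S₂ hy)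

/-- Compatibility of `Φ` with the `d`-invariants: `d₂([Φ χ]) = ε · d₁([χ])`,
where `d` is the minimum of `(|χ'|² - rk)/4` over the class. -/
noncomputable def DCompat (B₁ : Matrix ι ι ℤ) (S₁ : Set (ι → ℚ))
    (B₂ : Matrix ι' ι' ℤ) (S₂ : Set (ι' → ℚ))
    (ε : ℚ) (Φ : (ι → ℚ) → (ι' → ℚ)) : Prop :=
  ∀ χ ∈ CharOf B₁ S₁, ∀ q : ℚ,
    IsLeast {t | ∃ χ' ∈ CharOf B₁ S₁, SameClass S₁ χ χ' ∧
      t = (qform B₁ χ' χ' - (rkOf S₁ : ℚ)) / 4} q →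
    IsLeast {t | ∃ μ ∈ CharOf B₂ S₂, SameClass S₂ (Φ χ) μ ∧
      t = (qform B₂ μ μ - (rkOf S₂ : ℚ)) / 4} (ε * q)

/-- Compatibility of `Φ` with the `ρ`-invariants: `ρ₂([Φ χ]) ≡ ε · ρ₁([χ]) (mod 2)`. -/
def RhoCompat (B₁ : Matrix ι ι ℤ) (S₁ : Set (ι → ℚ))
    (B₂ : Matrix ι' ι' ℤ) (S₂ : Set (ι' → ℚ))
    (ε : ℚ) (Φ : (ι → ℚ) → (ι' → ℚ)) : Prop :=
  ∀ χ ∈ CharOf B₁ S₁, ∀ s₁ s₂ : ℤ, IsSignatureOf B₁ S₁ s₁ → IsSignatureOf B₂ S₂ s₂ →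
    ∃ m : ℤ, (qform B₂ (Φ χ) (Φ χ) - (s₂ : ℚ)) / 4 - ε * ((qform B₁ χ χ - (s₁ : ℚ)) / 4)
      = 2 * (m : ℚ)

/-- The `d`-invariants `(C(S₁), d₁)` and `(C(S₂), ε·d₂)` are isomorphic. -/
noncomputable def DIso (B₁ : Matrix ι ι ℤ) (S₁ : Set (ι → ℚ))
    (B₂ : Matrix ι' ι' ℤ) (S₂ : Set (ι' → ℚ)) (ε : ℚ) : Prop :=
  ∃ (Φ : (ι → ℚ) → (ι' → ℚ)) (ψ : disc B₁ S₁ ≃+ disc B₂ S₂),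
    TorsorMapIso B₁ S₁ B₂ S₂ Φ ψ ∧ DCompat B₁ S₁ B₂ S₂ ε Φ

end LatticeDefs

/-- An abstract integral lattice, presented by its Gram matrix. -/
structure IntLattice where
  n : ℕ
  B : Matrix (Fin n) (Fin n) ℤ
  symm : B.IsSymm
  nondeg : B.det ≠ 0

/-- The Gram matrix of the orthogonal direct sum `Λ₁ ⊥ Λ₂`. -/
def glueGram (L₁ L₂ : IntLattice) :
    Matrix (Fin L₁.n ⊕ Fin L₂.n) (Fin L₁.n ⊕ Fin L₂.n) ℤ :=
  Matrix.fromBlocks L₁.B 0 0 L₂.B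

/-- The glue lattice `Λ₁ ⊕_ψ Λ₂ = {x + y ∈ Λ₁* ⊕ Λ₂* : ψ(x̄) = ȳ}`. -/
def glueSet (L₁ L₂ : IntLattice)
    (ψ : disc L₁.B (intVecs (Fin L₁.n)) ≃+ disc L₂.B (intVecs (Fin L₂.n))) :
    Set (Fin L₁.n ⊕ Fin L₂.n → ℚ) :=
  {w | ∃ (h₁ : (w ∘ Sum.inl) ∈ dualOf L₁.B (intVecs (Fin L₁.n)))
        (h₂ : (w ∘ Sum.inr) ∈ dualOf L₂.B (intVecs (Fin L₂.n))),
        ψ (dmk _ _ h₁) = dmk _ _ h₂}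

/-- `Λ₁` embedded in the first factor of `Λ₁* ⊕ Λ₂*`. -/
def inlLat (L₁ L₂ : IntLattice) : Set (Fin L₁.n ⊕ Fin L₂.n → ℚ) :=
  {w | (w ∘ Sum.inl) ∈ intVecs (Fin L₁.n) ∧ w ∘ Sum.inr = 0}

/-- `Λ₂` embedded in the second factor of `Λ₁* ⊕ Λ₂*`. -/
def inrLat (L₁ L₂ : IntLattice) : Set (Fin L₁.n ⊕ Fin L₂.n → ℚ) :=
  {w | (w ∘ Sum.inr) ∈ intVecs (Fin L₂.n) ∧ w ∘ Sum.inl = 0}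

/-- Stabilization `S ⊕ ℤᵏ`. -/
def stabSet {ι : Type} [Fintype ι] [DecidableEq ι] (S : Set (ι → ℚ)) (k : ℕ) :
    Set (ι ⊕ Fin k → ℚ) :=
  {w | (w ∘ Sum.inl) ∈ S ∧ ∀ j, isInt (w (Sum.inr j))}

/-- A finite loopless multigraph, with a reference orientation of each edge. -/
structure MultiGraph where
  nV : ℕ
  nE : ℕ
  hd : Fin nE → Fin nV
  tl : Fin nE → Fin nV
  loopless : ∀ e, hd e ≠ tl e

namespace MultiGraph

/-- The boundary map `C₁(G;ℚ) → C₀(G;ℚ)`, `∂ e = head(e) − tail(e)`. -/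
def bndry (G : MultiGraph) (x : Fin G.nE → ℚ) : Fin G.nV → ℚ :=
  fun v => ∑ e, x e * ((if G.hd e = v then 1 else 0) - (if G.tl e = v then 1 else 0))

/-- The flow lattice `ℱ(G) = ker ∂ ∩ C₁(G;ℤ)`. -/
def flowSet (G : MultiGraph) : Set (Fin G.nE → ℚ) :=
  {x | (∀ e, isInt (x e)) ∧ G.bndry x = 0}

/-- The cut lattice `𝒞(G) = im ∂* ∩ C₁(G;ℤ)`. -/
def cutSet (G : MultiGraph) : Set (Fin G.nE → ℚ) :=
  {x | (∀ e, isInt (x e)) ∧ ∃ g : Fin G.nV → ℚ, ∀ e, x e = g (G.hd e) - g (G.tl e)}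

/-- Reachability using only edges from the set `A`. -/
def ReachIn (G : MultiGraph) (A : Set (Fin G.nE)) : Fin G.nV → Fin G.nV → Prop :=
  Relation.ReflTransGen
    (fun u v => ∃ e ∈ A, (G.hd e = u ∧ G.tl e = v) ∨ (G.hd e = v ∧ G.tl e = u))

def Connected (G : MultiGraph) : Prop := ∀ u v, G.ReachIn Set.univ u v

/-- 2-edge-connectedness: connected, and removing any one edge leaves it connected. -/
def TwoEdgeConnected (G : MultiGraph) : Prop :=
  G.Connected ∧ ∀ e : Fin G.nE, ∀ u v, G.ReachIn {e}ᶜ u v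

/-- `C` is the edge set of a cycle of `G`. -/
def IsCycleEdgeSet (G : MultiGraph) (C : Set (Fin G.nE)) : Prop :=
  ∃ k : ℕ, 0 < k ∧ ∃ (e : Fin k → Fin G.nE) (v : Fin k → Fin G.nV),
    Function.Injective e ∧ Function.Injective v ∧ C = Set.range e ∧
    ∀ i, (G.hd (e i) = v (finRotate k i) ∧ G.tl (e i) = v i) ∨
         (G.tl (e i) = v (finRotate k i) ∧ G.hd (e i) = v i)

/-- A maximal spanning forest: acyclic and realizing all of `G`'s reachability. -/
def IsMaxForest (G : MultiGraph) (F : Finset (Fin G.nE)) : Prop :=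
  (∀ C, G.IsCycleEdgeSet C → ¬(C ⊆ (↑F : Set (Fin G.nE)))) ∧
  ∀ u v, G.ReachIn Set.univ u v → G.ReachIn (↑F) u v

open Classical in
/-- The fundamental cut vector of `e ∈ F`:
`+1` on edges leaving the component `K₁` of the tail of `e` in `F − e`,
`−1` on edges entering it, `0` otherwise. -/
noncomputable def cutVec (G : MultiGraph) (F : Finset (Fin G.nE)) (e : Fin G.nE) :
    Fin G.nE → ℚ := fun j =>
  (if G.ReachIn (↑(F.erase e)) (G.tl j) (G.tl e) then 1 else 0)
    - (if G.ReachIn (↑(F.erase e)) (G.hd j) (G.tl e) then 1 else 0)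

/-- `x` is the fundamental cycle vector of `e ∉ F`: the unique flow supported on
`F ∪ {e}` whose coefficient on `e` is `+1`. -/
def IsFundCycleVec (G : MultiGraph) (F : Finset (Fin G.nE)) (e : Fin G.nE)
    (x : Fin G.nE → ℚ) : Prop :=
  G.bndry x = 0 ∧ (∀ j, j ∉ F → j ≠ e → x j = 0) ∧ x e = 1

/-- Reorienting the edges of `G`: `o e = true` keeps the reference direction. -/
def reorient (G : MultiGraph) (o : Fin G.nE → Bool) : MultiGraph :=
  { G with
    hd := fun e => if o e then G.hd e else G.tl e
    tl := fun e => if o e then G.tl e else G.hd e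
    loopless := by
      intro e
      by_cases h : o e = true
      · simpa [h] using G.loopless e
      · simpa [h] using (G.loopless e).symm }

end MultiGraph

/-- A 2-isomorphism: a bijection of edge sets preserving edge sets of cycles. -/
def TwoIsomorphic (G G' : MultiGraph) : Prop :=
  ∃ σ : Fin G.nE ≃ Fin G'.nE, ∀ C, G.IsCycleEdgeSet C ↔ G'.IsCycleEdgeSet (σ '' C)

/-!
Realise the restriction maps `r₁, r₂` as the projections `π₁, π₂` for the decomposition
`ℚⁿ = span Λ₁ ⊕ span Λ₂` (orthogonal, by complementarity), so that `π₁ + π₂ = id`.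
A primitive sublattice `Λ ⊆ ℤⁿ` is saturated, `ℤⁿ ∩ span Λ = Λ`: an integral `w ∈ span Λ` pairs
integrally with the lifts to `ℤⁿ` of all elements of `Λ*`, hence with `Λ*`, so `w ∈ Λ** = Λ`.
Consequently, for `z ∈ ℤⁿ`, `π₁ z ∈ Λ₁ ↔ π₂ z = z - π₁ z ∈ Λ₂`. As characteristic covectors of
`ℤⁿ` differ by elements of `2ℤⁿ`, this says that `r₁ χ, r₁ χ'` are congruent mod `2Λ₁` iff
`r₂ χ, r₂ χ'` are congruent mod `2Λ₂`, which makes `φ` well defined and bijective; on the groups,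
`r₁` and `r₂` both identify `ℤⁿ / (Λ₁ ⊕ Λ₂)` with the discriminant groups.

For the `d`-invariants, let `ξ₀` be short in its class and `χ₀ ∈ Short(ℤⁿ)` a lift of it, so that
`|ξ₀| + |r₂ χ₀| = |χ₀| = n`. Every `μ` in the class `φ[ξ₀]` has `ξ₀ + μ ∈ Char(ℤⁿ)`, hence
`|ξ₀| + |μ| ≥ n`. So `r₂ χ₀` is short and `d₂(φ[ξ₀]) = (n - |ξ₀| - rk Λ₂) / 4 = -d₁([ξ₀])`.
-/

open Submodule (span)

lemma isInt_iff_mem_range {q : ℚ} : isInt q ↔ q ∈ (Int.castRingHom ℚ).range := by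
  simp [isInt, eq_comm]

section Generic

variable {ι : Type} {S : Set (ι → ℚ)}

def IsLat.toAddSubgroup (h : IsLat S) : AddSubgroup (ι → ℚ) :=
  AddSubgroup.ofSub S ⟨0, h.1⟩ fun x hx y hy => by simpa [sub_eq_add_neg] using h.2 x hx y hy

lemma eq_of_add_two_smul_eq_add_two_smul {χ x y : ι → ℚ}
    (h : χ + (2 : ℚ) • x = χ + (2 : ℚ) • y) : x = y :=
  smul_right_injective _ two_ne_zero (add_left_cancel h)

lemma sameClass_add_two_smul_iff {χ x : ι → ℚ} :
    SameClass S χ (χ + (2 : ℚ) • x) ↔ x ∈ S := by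
  refine ⟨fun ⟨y, hy, hxy⟩ => ?_, fun hx => ⟨x, hx, rfl⟩⟩
  rwa [eq_of_add_two_smul_eq_add_two_smul hxy]

lemma SameClass.refl (h : IsLat S) (χ : ι → ℚ) : SameClass S χ χ :=
  ⟨0, h.1, by rw [smul_zero, add_zero]⟩

lemma SameClass.trans (h : IsLat S) {χ χ' χ'' : ι → ℚ} (h₁ : SameClass S χ χ')
    (h₂ : SameClass S χ' χ'') : SameClass S χ χ'' := by
  obtain ⟨y, hy, rfl⟩ := h₁
  obtain ⟨y', hy', rfl⟩ := h₂
  exact ⟨y + y', h.toAddSubgroup.add_mem hy hy', by module⟩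

variable [Fintype ι] {B : Matrix ι ι ℤ}

lemma qform_smul_left (c : ℚ) (x y : ι → ℚ) : qform B (c • x) y = c * qform B x y :=
  smul_dotProduct _ _ _

lemma dotProduct_eq_zero_of_mem_span {x t : ι → ℚ} (h : ∀ u ∈ S, x ⬝ᵥ u = 0)
    (ht : t ∈ span ℚ S) : x ⬝ᵥ t = 0 := by
  induction ht using Submodule.span_induction with
  | mem u hu => exact h u hu
  | zero => exact dotProduct_zero x
  | add a b _ _ ha hb => rw [dotProduct_add, ha, hb, add_zero]
  | smul c a _ ha => rw [dotProduct_smul, ha, smul_zero]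

lemma eq_of_forall_dotProduct_eq {v v' : ι → ℚ} (hv : v ∈ span ℚ S) (hv' : v' ∈ span ℚ S)
    (h : ∀ u ∈ S, v ⬝ᵥ u = v' ⬝ᵥ u) : v = v' := by
  have hperp : ∀ u ∈ S, (v - v') ⬝ᵥ u = 0 := fun u hu => by
    rw [sub_dotProduct, h u hu, sub_self]
  exact sub_eq_zero.1 <| dotProduct_self_eq_zero.1 <|
    dotProduct_eq_zero_of_mem_span hperp (Submodule.sub_mem _ hv hv')

variable [DecidableEq ι]

lemma qform_one (x y : ι → ℚ) : qform (1 : Matrix ι ι ℤ) x y = x ⬝ᵥ y := by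
  rw [qform, Matrix.map_one _ Int.cast_zero Int.cast_one, one_mulVec]

lemma mem_latIn_iff (h : IsLat S) {x : dualOf B S} : x ∈ latIn B S ↔ (x : ι → ℚ) ∈ S := by
  refine ⟨fun hx => ?_, fun hx => AddSubgroup.subset_closure hx⟩
  have : latIn B S ≤ h.toAddSubgroup.comap (dualOf B S).subtype :=
    (AddSubgroup.closure_le _).2 fun y hy => hy
  exact this hx

lemma dmk_eq_zero_iff (h : IsLat S) {x : ι → ℚ} (hx : x ∈ dualOf B S) :
    dmk B S hx = 0 ↔ x ∈ S :=
  (QuotientAddGroup.eq_zero_iff _).trans (mem_latIn_iff h)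

lemma exists_eq_add_two_smul_of_mem_charOf {χ χ' : ι → ℚ} (hχ : χ ∈ CharOf B S)
    (hχ' : χ' ∈ CharOf B S) : ∃ x ∈ dualOf B S, χ' = χ + (2 : ℚ) • x := by
  refine ⟨(2 : ℚ)⁻¹ • (χ' - χ),
    ⟨Submodule.smul_mem _ _ (Submodule.sub_mem _ hχ'.1.1 hχ.1.1), fun y hy => ?_⟩, by module⟩
  obtain ⟨m, hm⟩ := hχ.2 y hy
  obtain ⟨m', hm'⟩ := hχ'.2 y hy
  refine ⟨m' - m, ?_⟩
  rw [qform_smul_left, sub_eq_add_neg, qform_add_left, qform_neg_left]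
  push_cast
  linarith

lemma add_two_smul_mem_charOf {χ x : ι → ℚ} (hχ : χ ∈ CharOf B S) (hx : x ∈ dualOf B S) :
    χ + (2 : ℚ) • x ∈ CharOf B S := by
  refine ⟨add_mem hχ.1 (by rw [two_smul]; exact add_mem hx hx), fun y hy => ?_⟩
  obtain ⟨m, hm⟩ := hχ.2 y hy
  obtain ⟨k, hk⟩ := hx.2 y hy
  refine ⟨m + k, ?_⟩
  rw [qform_add_left, qform_smul_left, hk]
  push_cast
  linarith

end Generic

section StandardLattice

variable {n : ℕ}

local notation "𝟙" => (1 : Matrix (Fin n) (Fin n) ℤ)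
local notation "ℤⁿ" => intVecs (Fin n)

section IntVecs

variable {x y χ : Fin n → ℚ}

lemma sub_mem_intVecs (hx : x ∈ ℤⁿ) (hy : y ∈ ℤⁿ) : x - y ∈ ℤⁿ := fun i => by
  obtain ⟨a, ha⟩ := hx i
  obtain ⟨b, hb⟩ := hy i
  exact ⟨a - b, by simp [ha, hb]⟩

lemma dotProduct_isInt (hx : x ∈ ℤⁿ) (hy : y ∈ ℤⁿ) : isInt (x ⬝ᵥ y) :=
  isInt_iff_mem_range.2 <| sum_mem fun i _ =>
    mul_mem (isInt_iff_mem_range.1 (hx i)) (isInt_iff_mem_range.1 (hy i))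

lemma single_mem_intVecs (i : Fin n) : (Pi.single i 1 : Fin n → ℚ) ∈ ℤⁿ := by
  intro j
  rcases eq_or_ne j i with rfl | h
  · exact ⟨1, by simp⟩
  · exact ⟨0, by simp [h]⟩

lemma span_intVecs : span ℚ ℤⁿ = ⊤ :=
  eq_top_iff.2 <| (Pi.basisFun ℚ (Fin n)).span_eq.ge.trans <| Submodule.span_mono <| by
    rintro _ ⟨i, rfl⟩
    simpa using single_mem_intVecs i

lemma rkOf_intVecs : rkOf ℤⁿ = n := by
  rw [rkOf, span_intVecs, finrank_top, Module.finrank_fin_fun]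

lemma mem_dualOf_intVecs_iff : x ∈ dualOf 𝟙 ℤⁿ ↔ x ∈ ℤⁿ := by
  refine ⟨fun hx i => ?_, fun hx => ⟨span_intVecs ▸ Submodule.mem_top,
    fun y hy => (qform_one x y).symm ▸ dotProduct_isInt hx hy⟩⟩
  simpa [qform_one] using hx.2 _ (single_mem_intVecs i)

lemma ones_mem_charOf_intVecs : (fun _ => 1 : Fin n → ℚ) ∈ CharOf 𝟙 ℤⁿ := by
  refine ⟨mem_dualOf_intVecs_iff.2 fun _ => ⟨1, by simp⟩, fun y hy => ?_⟩
  choose b hb using hy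
  obtain ⟨m, hm⟩ : Even (∑ i, (b i - b i * b i)) := Finset.even_sum _ fun i _ => by
    rw [show b i - b i * b i = -(b i * (b i - 1)) by ring]
    exact (Int.even_mul_pred_self _).neg
  refine ⟨m, ?_⟩
  simp only [qform_one, dotProduct, hb, one_mul, ← Finset.sum_sub_distrib]
  exact_mod_cast hm.trans (two_mul m).symm

lemma odd_of_mem_charOf_intVecs (hχ : χ ∈ CharOf 𝟙 ℤⁿ) (i : Fin n) :
    ∃ m : ℤ, χ i = 2 * m + 1 := by
  obtain ⟨m, hm⟩ := hχ.2 _ (single_mem_intVecs i)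
  exact ⟨m, by simpa [qform_one, sub_eq_iff_eq_add] using hm⟩

lemma card_le_dotProduct_self_of_mem_charOf (hχ : χ ∈ CharOf 𝟙 ℤⁿ) : (n : ℚ) ≤ χ ⬝ᵥ χ := by
  have h1 : ∀ i, (1 : ℚ) ≤ χ i * χ i := fun i => by
    obtain ⟨m, hm⟩ := odd_of_mem_charOf_intVecs hχ i
    have : (1 : ℤ) ≤ (2 * m + 1) * (2 * m + 1) := by
      rcases le_or_gt 0 m with h | h <;> nlinarith
    rw [hm]
    exact_mod_cast this
  calc (n : ℚ) = ∑ _i : Fin n, 1 := by simp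
    _ ≤ ∑ i, χ i * χ i := Finset.sum_le_sum fun i _ => h1 i

lemma dotProduct_self_of_mem_shortOf (hχ : χ ∈ ShortOf 𝟙 ℤⁿ) : χ ⬝ᵥ χ = n := by
  obtain ⟨w, hw, hχw⟩ := exists_eq_add_two_smul_of_mem_charOf hχ.1 ones_mem_charOf_intVecs
  have hle := hχ.2 _ ones_mem_charOf_intVecs ⟨w, mem_dualOf_intVecs_iff.1 hw, hχw⟩
  have hones : (fun _ => 1 : Fin n → ℚ) ⬝ᵥ (fun _ => 1) = n := by simp [dotProduct]
  rw [qform_one, qform_one, hones] at hle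
  exact le_antisymm hle (card_le_dotProduct_self_of_mem_charOf hχ.1)

end IntVecs

section Saturation

variable {S : Set (Fin n → ℚ)}

lemma exists_basis_of_subset_intVecs (hS : IsLat S) (hsub : S ⊆ ℤⁿ) :
    ∃ (k : ℕ) (v : Fin k → Fin n → ℚ), (∀ i, v i ∈ S) ∧ LinearIndependent ℚ v ∧
      ∀ x ∈ S, ∃ m : Fin k → ℤ, x = ∑ i, (m i : ℚ) • v i := by
  let c : (Fin n → ℤ) →ₗ[ℤ] Fin n → ℚ := (Int.castAddHom ℚ).toIntLinearMap.compLeft (Fin n)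
  have hc : Function.Injective c := fun a b h => funext fun i => by
    simpa [c] using congrFun h i
  let N : Submodule ℤ (Fin n → ℤ) := hS.toAddSubgroup.toIntSubmodule.comap c
  obtain ⟨k, b⟩ := Submodule.basisOfPid (Pi.basisFun ℤ (Fin n)) N
  refine ⟨k, fun i => c (b i), fun i => (b i).2, ?_, fun x hx => ?_⟩
  · rw [← LinearIndependent.iff_fractionRing ℤ ℚ]
    exact b.linearIndependent.map' (c ∘ₗ N.subtype)
      (LinearMap.ker_eq_bot.2 (hc.comp Subtype.val_injective))
  · choose a ha using hsub hx
    have hxa : x = c a := funext ha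
    have haN : a ∈ N := show c a ∈ S from hxa ▸ hx
    refine ⟨b.repr ⟨a, haN⟩, ?_⟩
    calc x = c ((∑ i, b.repr ⟨a, haN⟩ i • b i : N) : Fin n → ℤ) := by rw [b.sum_repr, hxa]
      _ = _ := by
        simp only [Submodule.coe_sum, SetLike.val_smul, map_sum, map_zsmul,
          Int.cast_smul_eq_zsmul]

lemma mem_of_forall_isInt_dotProduct (hS : IsLat S) (hsub : S ⊆ ℤⁿ) {w : Fin n → ℚ}
    (hw : w ∈ span ℚ S) (hint : ∀ x ∈ dualOf 𝟙 S, isInt (x ⬝ᵥ w)) : w ∈ S := by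
  obtain ⟨k, v, hvS, hli, hgen⟩ := exists_basis_of_subset_intVecs hS hsub
  let W := span ℚ (Set.range v)
  have hSW : span ℚ S ≤ W := Submodule.span_le.2 fun x hx => by
    obtain ⟨m, rfl⟩ := hgen x hx
    exact sum_mem fun i _ => Submodule.smul_mem _ _ (Submodule.subset_span ⟨i, rfl⟩)
  have hWS : W ≤ span ℚ S :=
    Submodule.span_le.2 <| Set.range_subset_iff.2 fun i => Submodule.subset_span (hvS i)
  let Bf := LinearMap.BilinForm.restrict (dotProductBilin ℚ ℚ) W
  have hBf : Bf.Nondegenerate := ⟨fun x hx => Subtype.ext (dotProduct_self_eq_zero.1 (hx x)),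
    fun x hx => Subtype.ext (dotProduct_self_eq_zero.1 (hx x))⟩
  let d := Bf.dualBasis hBf (Module.Basis.span hli)
  have hcoord : ∀ i (c : Fin k → ℚ), (d i : Fin n → ℚ) ⬝ᵥ ∑ j, c j • v j = c i := by
    intro i c
    have hdv : ∀ j, (d i : Fin n → ℚ) ⬝ᵥ v j = if j = i then 1 else 0 := fun j => by
      have := Bf.apply_dualBasis_left hBf (Module.Basis.span hli) i j
      rwa [Module.Basis.span_apply] at this
    simp [dotProduct_sum, dotProduct_smul, hdv]
  have hd : ∀ i, (d i : Fin n → ℚ) ∈ dualOf 𝟙 S := fun i =>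
    ⟨hWS (d i).2, fun u hu => by
      obtain ⟨m, rfl⟩ := hgen u hu
      exact ⟨m i, by rw [qform_one, hcoord]⟩⟩
  obtain ⟨c, rfl⟩ := (Submodule.mem_span_range_iff_exists_fun ℚ).1 (hSW hw)
  choose m hm using fun i => hcoord i c ▸ hint _ (hd i)
  simp only [hm, Int.cast_smul_eq_zsmul]
  exact sum_mem fun i _ => hS.toAddSubgroup.zsmul_mem (hvS i) (m i)

lemma mem_of_mem_span_of_primitiveIn (hS : IsLat S) (hsub : S ⊆ ℤⁿ) (hprim : PrimitiveIn 𝟙 ℤⁿ S)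
    {w : Fin n → ℚ} (hw : w ∈ ℤⁿ) (hwS : w ∈ span ℚ S) : w ∈ S := by
  refine mem_of_forall_isInt_dotProduct hS hsub hwS fun x hx => ?_
  obtain ⟨z, hz, hzx⟩ := hprim x hx
  have hzw : (z - x) ⬝ᵥ w = 0 := dotProduct_eq_zero_of_mem_span (fun u hu => by
    rw [sub_dotProduct, ← qform_one, ← qform_one, hzx u hu, sub_self]) hwS
  rw [sub_dotProduct, sub_eq_zero] at hzw
  exact hzw ▸ dotProduct_isInt (mem_dualOf_intVecs_iff.1 hz) hw

end Saturation

structure IsPrimitiveSplitting (S₁ S₂ : Set (Fin n → ℚ)) : Prop where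
  isLat_left : IsLat S₁
  isLat_right : IsLat S₂
  subset_left : S₁ ⊆ ℤⁿ
  subset_right : S₂ ⊆ ℤⁿ
  complementary : ComplementaryIn 𝟙 ℤⁿ S₁ S₂
  primitive_left : PrimitiveIn 𝟙 ℤⁿ S₁
  primitive_right : PrimitiveIn 𝟙 ℤⁿ S₂

namespace IsPrimitiveSplitting

variable {S₁ S₂ : Set (Fin n → ℚ)} {a b x y z χ χ' ξ ξ' μ : Fin n → ℚ}

lemma symm (P : IsPrimitiveSplitting S₁ S₂) : IsPrimitiveSplitting S₂ S₁ where
  isLat_left := P.isLat_right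
  isLat_right := P.isLat_left
  subset_left := P.subset_right
  subset_right := P.subset_left
  complementary := ⟨fun x hx y hy => by
    rw [qform_one, dotProduct_comm, ← qform_one]
    exact P.complementary.1 y hy x hx, (add_comm _ _).trans P.complementary.2⟩
  primitive_left := P.primitive_right
  primitive_right := P.primitive_left

lemma dotProduct_eq_zero (P : IsPrimitiveSplitting S₁ S₂) (ha : a ∈ span ℚ S₁)
    (hb : b ∈ span ℚ S₂) : a ⬝ᵥ b = 0 := by
  rw [dotProduct_comm]
  refine dotProduct_eq_zero_of_mem_span (fun u hu => ?_) ha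
  rw [dotProduct_comm]
  exact dotProduct_eq_zero_of_mem_span (fun v hv => by
    rw [← qform_one]; exact P.complementary.1 u hu v hv) hb

lemma dotProduct_self_add (P : IsPrimitiveSplitting S₁ S₂) (ha : a ∈ span ℚ S₁)
    (hb : b ∈ span ℚ S₂) : (a + b) ⬝ᵥ (a + b) = a ⬝ᵥ a + b ⬝ᵥ b := by
  rw [add_dotProduct, dotProduct_add, dotProduct_add, dotProduct_comm b a,
    P.dotProduct_eq_zero ha hb]
  ring

lemma rkOf_add_rkOf (P : IsPrimitiveSplitting S₁ S₂) : (rkOf S₁ : ℚ) + rkOf S₂ = n := by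
  exact_mod_cast rkOf_intVecs (n := n) ▸ P.complementary.2

lemma isCompl (P : IsPrimitiveSplitting S₁ S₂) : IsCompl (span ℚ S₁) (span ℚ S₂) := by
  refine (Submodule.isCompl_iff_disjoint _ _ ?_).2 <| Submodule.disjoint_def.2 fun x h₁ h₂ =>
    dotProduct_self_eq_zero.1 (P.dotProduct_eq_zero h₁ h₂)
  rw [Module.finrank_fin_fun]
  exact (rkOf_intVecs (n := n) ▸ P.complementary.2).ge

noncomputable def proj (P : IsPrimitiveSplitting S₁ S₂) : (Fin n → ℚ) →ₗ[ℚ] Fin n → ℚ :=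
  (span ℚ S₁).projection (span ℚ S₂) P.isCompl

lemma proj_mem (P : IsPrimitiveSplitting S₁ S₂) (x : Fin n → ℚ) : P.proj x ∈ span ℚ S₁ :=
  Submodule.projection_apply_mem _ x

lemma proj_add_proj_symm (P : IsPrimitiveSplitting S₁ S₂) (x : Fin n → ℚ) :
    P.proj x + P.symm.proj x = x :=
  Submodule.projection_add_projection_eq_self P.isCompl x

lemma proj_dotProduct (P : IsPrimitiveSplitting S₁ S₂) (z : Fin n → ℚ) {u : Fin n → ℚ}
    (hu : u ∈ S₁) : P.proj z ⬝ᵥ u = z ⬝ᵥ u := by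
  conv_rhs => rw [← P.proj_add_proj_symm z]
  rw [add_dotProduct, dotProduct_comm (P.symm.proj z),
    P.dotProduct_eq_zero (Submodule.subset_span hu) (P.symm.proj_mem z), add_zero]

lemma proj_eq_of_forall_qform_eq (P : IsPrimitiveSplitting S₁ S₂) (hx : x ∈ span ℚ S₁)
    (h : ∀ u ∈ S₁, qform 𝟙 z u = qform 𝟙 x u) : P.proj z = x :=
  eq_of_forall_dotProduct_eq (P.proj_mem z) hx fun u hu => by
    rw [P.proj_dotProduct z hu, ← qform_one, ← qform_one, h u hu]

lemma proj_mem_dualOf (P : IsPrimitiveSplitting S₁ S₂) (hz : z ∈ ℤⁿ) :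
    P.proj z ∈ dualOf 𝟙 S₁ :=
  ⟨P.proj_mem z, fun u hu => by
    rw [qform_one, P.proj_dotProduct z hu]
    exact dotProduct_isInt hz (P.subset_left hu)⟩

lemma exists_proj_eq (P : IsPrimitiveSplitting S₁ S₂) (hx : x ∈ dualOf 𝟙 S₁) :
    ∃ z ∈ ℤⁿ, P.proj z = x := by
  obtain ⟨z, hz, hzx⟩ := P.primitive_left x hx
  exact ⟨z, mem_dualOf_intVecs_iff.1 hz, P.proj_eq_of_forall_qform_eq hx.1 hzx⟩

lemma proj_symm_mem_of_proj_mem (P : IsPrimitiveSplitting S₁ S₂) (hz : z ∈ ℤⁿ)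
    (h : P.proj z ∈ S₁) : P.symm.proj z ∈ S₂ := by
  have hz₂ : P.symm.proj z = z - P.proj z := eq_sub_of_add_eq' (P.proj_add_proj_symm z)
  exact mem_of_mem_span_of_primitiveIn P.isLat_right P.subset_right P.primitive_right
    (hz₂ ▸ sub_mem_intVecs hz (P.subset_left h)) (P.symm.proj_mem z)

lemma proj_mem_iff (P : IsPrimitiveSplitting S₁ S₂) (hz : z ∈ ℤⁿ) :
    P.proj z ∈ S₁ ↔ P.symm.proj z ∈ S₂ :=
  ⟨P.proj_symm_mem_of_proj_mem hz, P.symm.proj_symm_mem_of_proj_mem hz⟩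

lemma proj_mem_charOf (P : IsPrimitiveSplitting S₁ S₂) (hχ : χ ∈ CharOf 𝟙 ℤⁿ) :
    P.proj χ ∈ CharOf 𝟙 S₁ :=
  ⟨P.proj_mem_dualOf (mem_dualOf_intVecs_iff.1 hχ.1), fun u hu => by
    simpa only [qform_one, P.proj_dotProduct χ hu] using hχ.2 u (P.subset_left hu)⟩

lemma exists_proj_eq_of_mem_charOf (P : IsPrimitiveSplitting S₁ S₂) (hξ : ξ ∈ CharOf 𝟙 S₁) :
    ∃ χ ∈ CharOf 𝟙 ℤⁿ, P.proj χ = ξ := by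
  obtain ⟨x, hx, rfl⟩ :=
    exists_eq_add_two_smul_of_mem_charOf (P.proj_mem_charOf ones_mem_charOf_intVecs) hξ
  obtain ⟨z, hz, rfl⟩ := P.exists_proj_eq hx
  exact ⟨_, add_two_smul_mem_charOf ones_mem_charOf_intVecs (mem_dualOf_intVecs_iff.2 hz),
    by rw [map_add, map_smul]⟩

lemma sameClass_proj_iff (P : IsPrimitiveSplitting S₁ S₂) (hχ : χ ∈ CharOf 𝟙 ℤⁿ)
    (hχ' : χ' ∈ CharOf 𝟙 ℤⁿ) :
    SameClass S₁ (P.proj χ) (P.proj χ') ↔ SameClass S₂ (P.symm.proj χ) (P.symm.proj χ') := by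
  obtain ⟨w, hw, rfl⟩ := exists_eq_add_two_smul_of_mem_charOf hχ hχ'
  simp only [map_add, map_smul, sameClass_add_two_smul_iff]
  exact P.proj_mem_iff (mem_dualOf_intVecs_iff.1 hw)

lemma add_mem_charOf_intVecs (P : IsPrimitiveSplitting S₁ S₂) (hχ : χ ∈ CharOf 𝟙 ℤⁿ)
    (h₁ : SameClass S₁ (P.proj χ) ξ) (h₂ : SameClass S₂ (P.symm.proj χ) μ) :
    ξ + μ ∈ CharOf 𝟙 ℤⁿ := by
  obtain ⟨y₁, hy₁, rfl⟩ := h₁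
  obtain ⟨y₂, hy₂, rfl⟩ := h₂
  have hsum : P.proj χ + (2 : ℚ) • y₁ + (P.symm.proj χ + (2 : ℚ) • y₂)
      = χ + (2 : ℚ) • (y₁ + y₂) := by
    linear_combination (norm := module) P.proj_add_proj_symm χ
  rw [hsum]
  exact add_two_smul_mem_charOf hχ (add_mem (mem_dualOf_intVecs_iff.2 (P.subset_left hy₁))
    (mem_dualOf_intVecs_iff.2 (P.subset_right hy₂)))

noncomputable def discRestrict (P : IsPrimitiveSplitting S₁ S₂) :
    dualOf 𝟙 ℤⁿ →+ disc 𝟙 S₁ :=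
  (QuotientAddGroup.mk' _).comp <| AddMonoidHom.mk'
    (fun z => ⟨P.proj z, P.proj_mem_dualOf (mem_dualOf_intVecs_iff.1 z.2)⟩)
    fun z z' => Subtype.ext (map_add P.proj (z : Fin n → ℚ) z')

lemma discRestrict_apply (P : IsPrimitiveSplitting S₁ S₂) (z : dualOf 𝟙 ℤⁿ) :
    P.discRestrict z = dmk 𝟙 S₁ (P.proj_mem_dualOf (mem_dualOf_intVecs_iff.1 z.2)) :=
  rfl

lemma discRestrict_surjective (P : IsPrimitiveSplitting S₁ S₂) :
    Function.Surjective P.discRestrict := by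
  refine fun q => QuotientAddGroup.induction_on q fun ⟨x, hx⟩ => ?_
  obtain ⟨z, hz, rfl⟩ := P.exists_proj_eq hx
  exact ⟨⟨z, mem_dualOf_intVecs_iff.2 hz⟩, rfl⟩

lemma ker_discRestrict (P : IsPrimitiveSplitting S₁ S₂) :
    P.discRestrict.ker = P.symm.discRestrict.ker := AddSubgroup.ext fun z => by
  simp only [AddMonoidHom.mem_ker, discRestrict_apply, dmk_eq_zero_iff P.isLat_left,
    dmk_eq_zero_iff P.isLat_right]
  exact P.proj_mem_iff (mem_dualOf_intVecs_iff.1 z.2)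

noncomputable def discEquiv (P : IsPrimitiveSplitting S₁ S₂) : disc 𝟙 S₁ ≃+ disc 𝟙 S₂ :=
  (QuotientAddGroup.quotientKerEquivOfSurjective _ P.discRestrict_surjective).symm.trans <|
    (QuotientAddGroup.quotientAddEquivOfEq P.ker_discRestrict).trans <|
      QuotientAddGroup.quotientKerEquivOfSurjective _ P.symm.discRestrict_surjective

lemma discEquiv_discRestrict (P : IsPrimitiveSplitting S₁ S₂) (z : dualOf 𝟙 ℤⁿ) :
    P.discEquiv (P.discRestrict z) = P.symm.discRestrict z := by
  have hmk : (QuotientAddGroup.quotientKerEquivOfSurjective _ P.discRestrict_surjective).symm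
      (P.discRestrict z) = QuotientAddGroup.mk z := (AddEquiv.symm_apply_eq _).2 rfl
  simp only [discEquiv, AddEquiv.trans_apply, hmk]
  rfl

open Classical in
noncomputable def charLift (P : IsPrimitiveSplitting S₁ S₂) (ξ : Fin n → ℚ) : Fin n → ℚ :=
  if h : ξ ∈ CharOf 𝟙 S₁ then (P.exists_proj_eq_of_mem_charOf h).choose else 0

lemma charLift_spec (P : IsPrimitiveSplitting S₁ S₂) (hξ : ξ ∈ CharOf 𝟙 S₁) :
    P.charLift ξ ∈ CharOf 𝟙 ℤⁿ ∧ P.proj (P.charLift ξ) = ξ := by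
  rw [charLift, dif_pos hξ]
  exact (P.exists_proj_eq_of_mem_charOf hξ).choose_spec

/-- The map `φ` on representatives: `r₁ χ ↦ r₂ χ`. -/
noncomputable def glue (P : IsPrimitiveSplitting S₁ S₂) (ξ : Fin n → ℚ) : Fin n → ℚ :=
  P.symm.proj (P.charLift ξ)

lemma sameClass_glue_iff (P : IsPrimitiveSplitting S₁ S₂) (hξ : ξ ∈ CharOf 𝟙 S₁)
    (hχ : χ ∈ CharOf 𝟙 ℤⁿ) :
    SameClass S₁ ξ (P.proj χ) ↔ SameClass S₂ (P.glue ξ) (P.symm.proj χ) := by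
  obtain ⟨hc, hcξ⟩ := P.charLift_spec hξ
  conv_lhs => rw [← hcξ]
  exact P.sameClass_proj_iff hc hχ

lemma discEquiv_dmk (P : IsPrimitiveSplitting S₁ S₂) (hξ : ξ ∈ CharOf 𝟙 S₁)
    (hξ' : ξ' ∈ CharOf 𝟙 S₁) (hx : x ∈ dualOf 𝟙 S₁) (hy : y ∈ dualOf 𝟙 S₂)
    (hξx : ξ' = ξ + (2 : ℚ) • x) (hglue : P.glue ξ' = P.glue ξ + (2 : ℚ) • y) :
    P.discEquiv (dmk 𝟙 S₁ hx) = dmk 𝟙 S₂ hy := by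
  obtain ⟨hc, hcξ⟩ := P.charLift_spec hξ
  obtain ⟨hc', hcξ'⟩ := P.charLift_spec hξ'
  obtain ⟨w, hw, hcc'⟩ := exists_eq_add_two_smul_of_mem_charOf hc hc'
  have hxw : P.proj w = x := by
    refine eq_of_add_two_smul_eq_add_two_smul (χ := ξ) ?_
    rw [← hξx, ← hcξ, ← hcξ', hcc', map_add, map_smul]
  have hyw : P.symm.proj w = y := by
    refine eq_of_add_two_smul_eq_add_two_smul (χ := P.glue ξ) ?_
    rw [← hglue, glue, glue, hcc', map_add, map_smul]
  subst hxw hyw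
  exact P.discEquiv_discRestrict ⟨w, hw⟩

lemma torsorMapIso (P : IsPrimitiveSplitting S₁ S₂) :
    TorsorMapIso 𝟙 S₁ 𝟙 S₂ P.glue P.discEquiv := by
  refine ⟨fun ξ hξ => P.symm.proj_mem_charOf (P.charLift_spec hξ).1,
    fun ξ hξ ξ' hξ' => ?_, fun μ hμ => ?_,
    fun ξ hξ ξ' hξ' x y hx hy => P.discEquiv_dmk hξ hξ' hx hy⟩
  · obtain ⟨hc', hcξ'⟩ := P.charLift_spec hξ'
    conv_lhs => rw [← hcξ']
    exact P.sameClass_glue_iff hξ hc'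
  · obtain ⟨χ, hχ, rfl⟩ := P.symm.exists_proj_eq_of_mem_charOf hμ
    exact ⟨P.proj χ, P.proj_mem_charOf hχ,
      (P.sameClass_glue_iff (P.proj_mem_charOf hχ) hχ).1 (SameClass.refl P.isLat_left _)⟩

lemma sameClass_glue_of_restrict_eq (P : IsPrimitiveSplitting S₁ S₂) (hχ : χ ∈ CharOf 𝟙 ℤⁿ)
    (hξ : ξ ∈ CharOf 𝟙 S₁) (hμ : μ ∈ CharOf 𝟙 S₂)
    (hχξ : ∀ u ∈ S₁, qform 𝟙 χ u = qform 𝟙 ξ u) (hχμ : ∀ u ∈ S₂, qform 𝟙 χ u = qform 𝟙 μ u) :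
    SameClass S₂ (P.glue ξ) μ := by
  rw [← P.symm.proj_eq_of_forall_qform_eq hμ.1.1 hχμ]
  refine (P.sameClass_glue_iff hξ hχ).1 ?_
  rw [P.proj_eq_of_forall_qform_eq hξ.1.1 hχξ]
  exact SameClass.refl P.isLat_left ξ

lemma dCompat_glue (P : IsPrimitiveSplitting S₁ S₂)
    (hsurj : ∀ ξ ∈ ShortOf 𝟙 S₁, ∃ χ ∈ ShortOf 𝟙 ℤⁿ, ∀ u ∈ S₁, qform 𝟙 χ u = qform 𝟙 ξ u) :
    DCompat 𝟙 S₁ 𝟙 S₂ (-1) P.glue := by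
  rintro ξ hξ _ ⟨⟨ξ₀, hξ₀, hξξ₀, rfl⟩, hmin⟩
  have hshort : ξ₀ ∈ ShortOf 𝟙 S₁ := ⟨hξ₀, fun ξ' hξ' h' => by
    have := hmin ⟨ξ', hξ', hξξ₀.trans P.isLat_left h', rfl⟩
    linarith⟩
  obtain ⟨χ₀, hχ₀, hχ₀ξ₀⟩ := hsurj ξ₀ hshort
  have hproj : P.proj χ₀ = ξ₀ := P.proj_eq_of_forall_qform_eq hξ₀.1.1 hχ₀ξ₀
  have hnorm : ξ₀ ⬝ᵥ ξ₀ + P.symm.proj χ₀ ⬝ᵥ P.symm.proj χ₀ = n := by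
    rw [← hproj, ← P.dotProduct_self_add (P.proj_mem _) (P.symm.proj_mem _),
      P.proj_add_proj_symm, dotProduct_self_of_mem_shortOf hχ₀]
  have hrk := P.rkOf_add_rkOf
  simp only [qform_one]
  refine ⟨⟨P.symm.proj χ₀, P.symm.proj_mem_charOf hχ₀.1,
    (P.sameClass_glue_iff hξ hχ₀.1).1 (hproj ▸ hξξ₀), by linarith⟩, ?_⟩
  rintro _ ⟨μ, hμ, hμξ, rfl⟩
  have hlift := P.charLift_spec hξ
  have hn := card_le_dotProduct_self_of_mem_charOf
    (P.add_mem_charOf_intVecs hlift.1 (hlift.2 ▸ hξξ₀) hμξ)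
  rw [P.dotProduct_self_add hξ₀.1.1 hμ.1.1] at hn
  linarith

end IsPrimitiveSplitting

end StandardLattice

/-- For complementary primitive sublattices `Λ₁, Λ₂ ⊆ ℤⁿ` with
`Short(ℤⁿ) → Short(Λ₁)` surjective, the rule `φ([r₁ χ]) = [r₂ χ]` gives a
well-defined isomorphism `(C(Λ₁), d₁) → (C(Λ₂), −d₂)`. -/
theorem stmt_10 (n : ℕ) (S₁ S₂ : Set (Fin n → ℚ))
    (h₁ : IsLat S₁) (h₂ : IsLat S₂)
    (hsub₁ : S₁ ⊆ intVecs (Fin n)) (hsub₂ : S₂ ⊆ intVecs (Fin n))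
    (hcomp : ComplementaryIn (1 : Matrix (Fin n) (Fin n) ℤ) (intVecs (Fin n)) S₁ S₂)
    (hprim₁ : PrimitiveIn (1 : Matrix (Fin n) (Fin n) ℤ) (intVecs (Fin n)) S₁)
    (hprim₂ : PrimitiveIn (1 : Matrix (Fin n) (Fin n) ℤ) (intVecs (Fin n)) S₂)
    (hsurj : ∀ ξ ∈ ShortOf (1 : Matrix (Fin n) (Fin n) ℤ) S₁,
      ∃ χ ∈ ShortOf (1 : Matrix (Fin n) (Fin n) ℤ) (intVecs (Fin n)),
        ∀ u ∈ S₁, qform (1 : Matrix (Fin n) (Fin n) ℤ) χ u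
          = qform (1 : Matrix (Fin n) (Fin n) ℤ) ξ u) :
    ∃ (Φ : (Fin n → ℚ) → (Fin n → ℚ))
      (ψ : disc (1 : Matrix (Fin n) (Fin n) ℤ) S₁ ≃+ disc (1 : Matrix (Fin n) (Fin n) ℤ) S₂),
      TorsorMapIso (1 : Matrix (Fin n) (Fin n) ℤ) S₁ (1 : Matrix (Fin n) (Fin n) ℤ) S₂ Φ ψ ∧
      DCompat (1 : Matrix (Fin n) (Fin n) ℤ) S₁ (1 : Matrix (Fin n) (Fin n) ℤ) S₂ (-1) Φ ∧
      (∀ χ ∈ CharOf (1 : Matrix (Fin n) (Fin n) ℤ) (intVecs (Fin n)),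
        ∀ ξ₁ ∈ CharOf (1 : Matrix (Fin n) (Fin n) ℤ) S₁,
        ∀ ξ₂ ∈ CharOf (1 : Matrix (Fin n) (Fin n) ℤ) S₂,
        (∀ u ∈ S₁, qform (1 : Matrix (Fin n) (Fin n) ℤ) χ u
          = qform (1 : Matrix (Fin n) (Fin n) ℤ) ξ₁ u) →
        (∀ u ∈ S₂, qform (1 : Matrix (Fin n) (Fin n) ℤ) χ u
          = qform (1 : Matrix (Fin n) (Fin n) ℤ) ξ₂ u) →
        SameClass S₂ (Φ ξ₁) ξ₂) := by
  have P : IsPrimitiveSplitting S₁ S₂ := ⟨h₁, h₂, hsub₁, hsub₂, hcomp, hprim₁, hprim₂⟩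
  exact ⟨P.glue, P.discEquiv, P.torsorMapIso, P.dCompat_glue hsurj,
    fun χ hχ ξ₁ hξ₁ ξ₂ hξ₂ => P.sameClass_glue_of_restrict_eq hχ hξ₁ hξ₂⟩

end Greene
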